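/- arXiv:1111.4714 — 2 statements merged into one kernel-verified Lean document; each statement's English description precedes it below -/
import Mathlib

section
/- Let X and Y be Banach spaces and Q : Y → X a bounded linear surjection. If X admits an ℓ₁ spreading model, then Y admits an ℓ₁ spreading model. -/
open Filter Topology

noncomputable section

/-- A Banach space `X` admits an `ℓ_p` spreading model (`1 ≤ p < ∞`): there are `δ > 0` and a
sequence `(x_n)` such that for all `n`, all `n ≤ ℓ_1 < ⋯ < ℓ_n` and all scalars `a_1, …, a_n`,
`δ (∑ |a i|^p)^(1/p) ≤ ‖∑ a i • x (ℓ i)‖ ≤ (1/δ) (∑ |a i|^p)^(1/p)`. -/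
def AdmitsLpSM (X : Type*) [NormedAddCommGroup X] [NormedSpace ℝ X] (p : ℝ) : Prop :=
  ∃ δ : ℝ, 0 < δ ∧ ∃ x : ℕ → X,
    ∀ (n : ℕ) (l : Fin n → ℕ), (∀ i, n ≤ l i) → StrictMono l →
      ∀ a : Fin n → ℝ,
        δ * (∑ i, |a i| ^ p) ^ (1 / p) ≤ ‖∑ i, a i • x (l i)‖ ∧
        ‖∑ i, a i • x (l i)‖ ≤ (1 / δ) * (∑ i, |a i| ^ p) ^ (1 / p)

/-- A Banach space `X` admits a `c₀` spreading model: as above with `max_i |a_i|`. -/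
def AdmitsC0SM (X : Type*) [NormedAddCommGroup X] [NormedSpace ℝ X] : Prop :=
  ∃ δ : ℝ, 0 < δ ∧ ∃ x : ℕ → X,
    ∀ (n : ℕ) (l : Fin n → ℕ), (∀ i, n ≤ l i) → StrictMono l →
      ∀ a : Fin n → ℝ,
        δ * (⨆ i, |a i|) ≤ ‖∑ i, a i • x (l i)‖ ∧
        ‖∑ i, a i • x (l i)‖ ≤ (1 / δ) * (⨆ i, |a i|)

/-- `(z_i)` is a Schauder basis of `Z`: every vector has a unique norm-convergent expansion
`∑ a_i z_i`. -/
def IsSchauderBasis {Z : Type*} [NormedAddCommGroup Z] [NormedSpace ℝ Z] (z : ℕ → Z) : Prop :=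
  ∀ v : Z, ∃! a : ℕ → ℝ,
    Tendsto (fun N => ∑ i ∈ Finset.range N, a i • z i) atTop (𝓝 v)

/-- `(z_i)` is a bimonotone Schauder basis: additionally, interval projections have norm `≤ 1`. -/
def IsBimonotoneBasis {Z : Type*} [NormedAddCommGroup Z] [NormedSpace ℝ Z] (z : ℕ → Z) : Prop :=
  IsSchauderBasis z ∧
  ∀ (a : ℕ → ℝ) (v : Z),
    Tendsto (fun N => ∑ i ∈ Finset.range N, a i • z i) atTop (𝓝 v) →
    ∀ m n : ℕ, ‖∑ i ∈ Finset.Ico m n, a i • z i‖ ≤ ‖v‖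

/-- `X` contains an isomorphic copy of `ℓ₁`: some closed subspace is isomorphic to `ℓ₁(ℕ)`. -/
def ContainsL1 (X : Type*) [NormedAddCommGroup X] [NormedSpace ℝ X] : Prop :=
  ∃ S : Submodule ℝ X, IsClosed (S : Set X) ∧
    Nonempty (lp (fun _ : ℕ => ℝ) 1 ≃L[ℝ] S)

/-- A sequence is seminormalized if `0 < inf ‖x n‖ ≤ sup ‖x n‖ < ∞`. -/
def Seminormalized {X : Type*} [NormedAddCommGroup X] (x : ℕ → X) : Prop :=
  ∃ c C : ℝ, 0 < c ∧ ∀ n, c ≤ ‖x n‖ ∧ ‖x n‖ ≤ C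

/-- A sequence is weakly null if it tends to `0` in the weak topology. -/
def WeaklyNull {X : Type*} [NormedAddCommGroup X] [NormedSpace ℝ X] (x : ℕ → X) : Prop :=
  ∀ f : X →L[ℝ] ℝ, Tendsto (fun n => f (x n)) atTop (𝓝 0)

/-- A sequence has a Cesàro summable subsequence `(y_n)`: `‖(1/n) ∑_{i=1}^n y_i‖ → 0`. -/
def HasCesaroSummableSubseq {X : Type*} [NormedAddCommGroup X] [NormedSpace ℝ X]
    (x : ℕ → X) : Prop :=
  ∃ φ : ℕ → ℕ, StrictMono φ ∧
    Tendsto (fun n : ℕ => ‖(n : ℝ)⁻¹ • ∑ i ∈ Finset.range n, x (φ i)‖) atTop (𝓝 0)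

/-- `(x_n)` is a basic sequence: it is a Schauder basis of its closed linear span. -/
def IsBasicSequence {X : Type*} [NormedAddCommGroup X] [NormedSpace ℝ X] (x : ℕ → X) : Prop :=
  ∀ v ∈ (Submodule.span ℝ (Set.range x)).topologicalClosure,
    ∃! a : ℕ → ℝ,
      Tendsto (fun N => ∑ i ∈ Finset.range N, a i • x i) atTop (𝓝 v)

/-- A sequence is boundedly complete: whenever the partial sums `∑_{i<N} a i • x i` are uniformly
bounded, the series converges in norm. -/
def IsBoundedlyComplete {X : Type*} [NormedAddCommGroup X] [NormedSpace ℝ X] (x : ℕ → X) : Prop :=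
  ∀ a : ℕ → ℝ, (∃ C : ℝ, ∀ N, ‖∑ i ∈ Finset.range N, a i • x i‖ ≤ C) →
    ∃ v : X, Tendsto (fun N => ∑ i ∈ Finset.range N, a i • x i) atTop (𝓝 v)

/-- A Banach space is hereditarily indecomposable if no infinite-dimensional closed subspace is
the topological direct sum of two infinite-dimensional closed subspaces. -/
def HereditarilyIndecomposable (W : Type*) [NormedAddCommGroup W] [NormedSpace ℝ W] : Prop :=
  ∀ A B : Submodule ℝ W, IsClosed (A : Set W) → IsClosed (B : Set W) →
    ¬ FiniteDimensional ℝ A → ¬ FiniteDimensional ℝ B → A ⊓ B = ⊥ →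
    ¬ IsClosed ((A ⊔ B : Submodule ℝ W) : Set W)

/-- `X` contains no infinite-dimensional closed reflexive subspace (reflexivity of a subspace `S`
being surjectivity of the canonical embedding of `S` into its bidual). -/
def NoReflexiveSubspace (X : Type*) [NormedAddCommGroup X] [NormedSpace ℝ X] : Prop :=
  ∀ S : Submodule ℝ X, IsClosed (S : Set X) → ¬ FiniteDimensional ℝ S →
    ¬ Function.Surjective (NormedSpace.inclusionInDoubleDual ℝ S)

end

/-- If `Q : Y → X` is a bounded linear surjection between Banach spaces and `X`
admits an `ℓ₁` spreading model, then so does `Y`. -/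
theorem statement2 {X Y : Type*} [NormedAddCommGroup X] [NormedSpace ℝ X] [CompleteSpace X]
    [NormedAddCommGroup Y] [NormedSpace ℝ Y] [CompleteSpace Y]
    (Q : Y →L[ℝ] X) (hQ : Function.Surjective Q)
    (h : AdmitsLpSM X 1) : AdmitsLpSM Y 1 := by
  obtain ⟨δ, hδ, x, hx⟩ := h
  obtain ⟨C, hC, hCx⟩ := Q.exists_preimage_norm_le hQ
  choose y hQy hy using hCx
  have hQpos : (0:ℝ) < ‖Q‖ + 1 := by positivity
  refine ⟨min (δ/(‖Q‖+1)) (δ/C), lt_min (by positivity) (by positivity),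
    fun n => y (x n), ?_⟩
  intro n l hl hlm a
  have hsimp : (∑ i, |a i| ^ (1:ℝ)) ^ (1/(1:ℝ)) = ∑ i, |a i| := by
    simp [Real.rpow_one]
  rw [hsimp]
  have hxb : ∀ m : ℕ, 1 ≤ m → ‖x m‖ ≤ 1/δ := by
    intro m hm
    have := (hx 1 (fun _ => m) (fun _ => hm) (Subsingleton.strictMono _)
      (fun _ => 1)).2
    simpa using this
  have hQs : Q (∑ i, a i • y (x (l i))) = ∑ i, a i • x (l i) := by
    simp [map_sum, hQy]
  constructor
  · have h1 : δ * ∑ i, |a i| ≤ ‖∑ i, a i • x (l i)‖ := by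
      have := (hx n l hl hlm a).1
      simpa [hsimp] using this
    have h2 : ‖∑ i, a i • x (l i)‖ ≤ (‖Q‖ + 1) * ‖∑ i, a i • y (x (l i))‖ := by
      rw [← hQs]
      calc ‖Q (∑ i, a i • y (x (l i)))‖ ≤ ‖Q‖ * ‖∑ i, a i • y (x (l i))‖ := Q.le_opNorm _
        _ ≤ (‖Q‖ + 1) * ‖∑ i, a i • y (x (l i))‖ := by
            apply mul_le_mul_of_nonneg_right (by linarith) (norm_nonneg _)
    calc min (δ/(‖Q‖+1)) (δ/C) * ∑ i, |a i|
        ≤ (δ/(‖Q‖+1)) * ∑ i, |a i| := by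
          apply mul_le_mul_of_nonneg_right (min_le_left _ _)
          exact Finset.sum_nonneg fun i _ => abs_nonneg _
      _ ≤ ‖∑ i, a i • y (x (l i))‖ := by
          rw [div_mul_eq_mul_div, div_le_iff₀ hQpos]
          calc δ * ∑ i, |a i| ≤ ‖∑ i, a i • x (l i)‖ := h1
            _ ≤ (‖Q‖ + 1) * ‖∑ i, a i • y (x (l i))‖ := h2
            _ = ‖∑ i, a i • y (x (l i))‖ * (‖Q‖ + 1) := mul_comm _ _
  · have key : ‖∑ i, a i • y (x (l i))‖ ≤ (C/δ) * ∑ i, |a i| := by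
      calc ‖∑ i, a i • y (x (l i))‖ ≤ ∑ i, ‖a i • y (x (l i))‖ :=
            norm_sum_le _ _
        _ ≤ ∑ i, |a i| * (C/δ) := by
            apply Finset.sum_le_sum
            intro i _
            rw [norm_smul, Real.norm_eq_abs]
            apply mul_le_mul_of_nonneg_left _ (abs_nonneg _)
            calc ‖y (x (l i))‖ ≤ C * ‖x (l i)‖ := hy _
              _ ≤ C * (1/δ) := by
                  apply mul_le_mul_of_nonneg_left _ hC.le
                  exact hxb _ (le_trans (Nat.one_le_iff_ne_zero.2
                    (fun h0 => by subst h0; exact absurd i.2 (Nat.not_lt_zero _))) (hl i))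
              _ = C/δ := by ring
        _ = (C/δ) * ∑ i, |a i| := by rw [← Finset.sum_mul]; ring
    refine key.trans ?_
    apply mul_le_mul_of_nonneg_right _ (Finset.sum_nonneg fun i _ => abs_nonneg _)
    rw [div_le_div_iff₀ hδ (lt_min (by positivity) (by positivity))]
    calc C * min (δ/(‖Q‖+1)) (δ/C) ≤ C * (δ/C) := by
          apply mul_le_mul_of_nonneg_left (min_le_right _ _) hC.le
      _ = δ := by field_simp
      _ ≤ 1 * δ := by linarith
end

section
/- Let Z be a Banach space with a bimonotone Schauder basis (z_i) with biorthogonal functionals (z_i*), let (Λ_i)_{i∈ℕ} be a partition of ℕ into infinite sets, and let G_Z be the set of all finitely supported functionals of the form ∑_{i=1}^d a_i (∑_{n∈E∩Λ_i} e_n*), where d ∈ ℕ, ‖∑_{i=1}^d a_i z_i*‖ ≤ 1 and E is a finite interval of ℕ (here (e_n*) are the coordinate functionals on the space c₀₀ of finitely supported scalar sequences). Then for every z = ∑_{i=1}^d a_i z_i with ‖z‖_Z = 1 and every choice ℓ_1 < ℓ_2 < ⋯ < ℓ_d with ℓ_i ∈ Λ_i, the vector x = ∑_{i=1}^d a_i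 e_{ℓ_i} ∈ c₀₀ satisfies sup{ |f(x)| : f ∈ G_Z } = 1. -/
open Filter Topology

/-- Let `Z` have a bimonotone Schauder basis `(z_i)` with biorthogonal
functionals `(z_i*)`, and let `(Λ_i)` be a partition of `ℕ` into infinite sets.  The ground set
`G_Z` consists of the functionals on `c₀₀` of the form
`∑_{i<e} b i (∑_{q ∈ E ∩ Λ_i} e_q*)` with `‖∑_{i<e} b i • z_i*‖ ≤ 1` and `E` a finite interval.
For every `z = ∑_{i<d} a i • z_i` of norm one and every choice `ℓ 0 < ℓ 1 < ⋯ < ℓ (d-1)` with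
`ℓ i ∈ Λ i`, the vector `x = ∑_{i<d} a i • e_{ℓ i} ∈ c₀₀` satisfies
`sup { |f x| : f ∈ G_Z } = 1`. -/
theorem statement6 {Z : Type*} [NormedAddCommGroup Z] [NormedSpace ℝ Z] [CompleteSpace Z]
    (z : ℕ → Z) (hbasis : IsBimonotoneBasis z)
    (zstar : ℕ → Z →L[ℝ] ℝ) (hbiorth : ∀ i j, zstar i (z j) = if i = j then 1 else 0)
    (Λ : ℕ → Set ℕ) (hdisj : Pairwise (Function.onFun Disjoint Λ))
    (hcover : ⋃ i, Λ i = Set.univ) (hinf : ∀ i, (Λ i).Infinite)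
    (d : ℕ) (a : Fin d → ℝ) (hz : ‖∑ i, a i • z i.val‖ = 1)
    (ℓ : Fin d → ℕ) (hmono : StrictMono ℓ) (hℓ : ∀ i, ℓ i ∈ Λ i.val)
    (x : ℕ →₀ ℝ) (hx : x = ∑ i, Finsupp.single (ℓ i) (a i)) :
    sSup { r : ℝ | ∃ (e : ℕ) (b : Fin e → ℝ) (m k : ℕ),
        ‖∑ i, b i • zstar i.val‖ ≤ 1 ∧
        r = |∑ i, b i * ∑ q ∈ Finset.Ico m k, (Λ i.val).indicator (⇑x) q| } = 1 := by
  classical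
  rcases Nat.eq_zero_or_pos d with rfl | hd
  · simp at hz
  set z0 : Z := ∑ i, a i • z i.val with hz0def
  have hz0 : ‖z0‖ = 1 := hz
  set a' : ℕ → ℝ := fun n => if h : n < d then a ⟨n, h⟩ else 0 with ha'
  set ℓ' : ℕ → ℕ := fun n => if h : n < d then ℓ ⟨n, h⟩ else 0 with hℓ'
  have ha'eq : ∀ j : Fin d, a' j.val = a j := fun j => by simp [ha']
  have hℓ'eq : ∀ j : Fin d, ℓ' j.val = ℓ j := fun j => by simp [hℓ']
  have hz0sum : z0 = ∑ n ∈ Finset.range d, a' n • z n := by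
    rw [hz0def, ← Fin.sum_univ_eq_sum_range (fun n => a' n • z n)]
    exact Finset.sum_congr rfl fun j _ => by rw [ha'eq]
  have hconst : ∀ N, d ≤ N → ∑ n ∈ Finset.range N, a' n • z n = z0 := by
    intro N hN
    rw [hz0sum]
    symm
    refine Finset.sum_subset (Finset.range_subset_range.2 hN) ?_
    intro n _ hn
    rw [Finset.mem_range, not_lt] at hn
    show (if h : n < d then a ⟨n, h⟩ else 0) • z n = 0
    rw [dif_neg (by omega : ¬ n < d), zero_smul]
  have hlim : Tendsto (fun N => ∑ n ∈ Finset.range N, a' n • z n) atTop (𝓝 z0) := by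
    refine Tendsto.congr' (eventually_atTop.2 ⟨d, fun N hN => (hconst N hN).symm⟩)
      tendsto_const_nhds
  have hIco_le : ∀ m' k', ‖∑ n ∈ Finset.Ico m' k', a' n • z n‖ ≤ 1 :=
    fun m' k' => hz0 ▸ hbasis.2 a' z0 hlim m' k'
  -- biorthogonal functionals extract coefficients
  have hcoeff : ∀ (c : ℕ → ℝ) (v : Z),
      Tendsto (fun N => ∑ n ∈ Finset.range N, c n • z n) atTop (𝓝 v) →
      ∀ i, zstar i v = c i := by
    intro c v hv i
    have h1 : Tendsto (fun N => zstar i (∑ n ∈ Finset.range N, c n • z n)) atTop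
        (𝓝 (zstar i v)) := ((zstar i).continuous.tendsto v).comp hv
    have h2 : ∀ N, i < N → zstar i (∑ n ∈ Finset.range N, c n • z n) = c i := by
      intro N hN
      rw [map_sum]
      have : ∀ n ∈ Finset.range N, zstar i (c n • z n) = if i = n then c n else 0 := by
        intro n _
        rw [map_smul, smul_eq_mul, hbiorth]
        split_ifs <;> ring
      rw [Finset.sum_congr rfl this, Finset.sum_ite_eq, if_pos (Finset.mem_range.2 hN)]
    have h3 : Tendsto (fun N : ℕ => zstar i (∑ n ∈ Finset.range N, c n • z n)) atTop
        (𝓝 (c i)) := by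
      refine Tendsto.congr' (eventually_atTop.2 ⟨i + 1, fun N hN => ?_⟩) tendsto_const_nhds
      exact (h2 N hN).symm
    exact tendsto_nhds_unique h1 h3
  -- membership of ℓ j in Λ i
  have hmemΛ : ∀ (i : ℕ) (j : Fin d), ℓ j ∈ Λ i ↔ (j : ℕ) = i := by
    intro i j
    constructor
    · intro h
      by_contra hne
      exact Set.disjoint_left.mp (hdisj (Ne.symm hne)) h (hℓ j)
    · rintro rfl; exact hℓ j
  have hxq : ∀ q, x q = ∑ j : Fin d, if ℓ j = q then a j else 0 := by
    intro q
    rw [hx, Finsupp.finset_sum_apply]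
    exact Finset.sum_congr rfl fun j _ => Finsupp.single_apply
  have hinner : ∀ (i m k : ℕ),
      (∑ q ∈ Finset.Ico m k, (Λ i).indicator (⇑x) q)
        = ∑ j : Fin d, if ((j : ℕ) = i ∧ ℓ j ∈ Finset.Ico m k) then a j else 0 := by
    intro i m k
    have hind : ∀ q, (Λ i).indicator (⇑x) q
        = ∑ j : Fin d, if ℓ j = q then (if ℓ j ∈ Λ i then a j else 0) else 0 := by
      intro q
      rw [Set.indicator_apply]
      split_ifs with hq
      · rw [hxq]
        refine Finset.sum_congr rfl fun j _ => ?_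
        by_cases h1 : ℓ j = q
        · subst h1; simp [hq]
        · simp [h1]
      · symm
        refine Finset.sum_eq_zero fun j _ => ?_
        by_cases h1 : ℓ j = q
        · rw [if_pos h1, if_neg (fun h2 => hq (h1 ▸ h2))]
        · rw [if_neg h1]
    simp_rw [hind]
    rw [Finset.sum_comm]
    refine Finset.sum_congr rfl fun j _ => ?_
    rw [Finset.sum_ite_eq]
    by_cases h1 : ℓ j ∈ Finset.Ico m k <;> by_cases h2 : (j : ℕ) = i <;>
      simp [h1, h2, hmemΛ i j]
  -- applying ∑ b i • zstar i to basis vectors and finite combinations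
  have hzj : ∀ (e : ℕ) (b : Fin e → ℝ) (jn : ℕ),
      (∑ i : Fin e, b i • zstar i.val) (z jn) = if h : jn < e then b ⟨jn, h⟩ else 0 := by
    intro e b jn
    rw [ContinuousLinearMap.sum_apply]
    simp only [ContinuousLinearMap.smul_apply, hbiorth, smul_eq_mul]
    by_cases h : jn < e
    · rw [dif_pos h]
      have hiff : ∀ i : Fin e, ((i : ℕ) = jn) ↔ i = ⟨jn, h⟩ :=
        fun i => ⟨fun hh => Fin.ext hh, fun hh => hh ▸ rfl⟩
      simp only [hiff, mul_ite, mul_one, mul_zero, Finset.sum_ite_eq',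
        Finset.mem_univ, if_true]
    · rw [dif_neg h]
      refine Finset.sum_eq_zero fun i _ => ?_
      have := i.isLt
      rw [if_neg (by omega), mul_zero]
  have hF : ∀ (e : ℕ) (b : Fin e → ℝ) (s : Finset ℕ) (c : ℕ → ℝ),
      (∑ i : Fin e, b i • zstar i.val) (∑ n ∈ s, c n • z n)
        = ∑ n ∈ s, c n * (if h : n < e then b ⟨n, h⟩ else 0) := by
    intro e b s c
    rw [map_sum]
    exact Finset.sum_congr rfl fun n _ => by rw [map_smul, smul_eq_mul, hzj]
  -- the value of a ground-set functional at x
  have hval : ∀ (e : ℕ) (b : Fin e → ℝ) (m k : ℕ),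
      ∑ i : Fin e, b i * ∑ q ∈ Finset.Ico m k, (Λ i.val).indicator (⇑x) q
        = ∑ n ∈ (Finset.range d).filter (fun n => m ≤ ℓ' n ∧ ℓ' n < k),
            a' n * (if h : n < e then b ⟨n, h⟩ else 0) := by
    intro e b m k
    simp_rw [hinner, Finset.mul_sum]
    rw [Finset.sum_comm, Finset.sum_filter,
      ← Fin.sum_univ_eq_sum_range
        (fun n => if m ≤ ℓ' n ∧ ℓ' n < k then a' n * (if h : n < e then b ⟨n, h⟩ else 0) else 0)]
    refine Finset.sum_congr rfl fun j _ => ?_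
    rw [hℓ'eq j, ha'eq j]
    by_cases hc : ℓ j ∈ Finset.Ico m k
    · rw [if_pos (Finset.mem_Ico.mp hc)]
      have hiff : ∀ i : Fin e, ((j : ℕ) = (i : ℕ) ∧ ℓ j ∈ Finset.Ico m k) ↔ ((i : ℕ) = (j : ℕ)) :=
        fun i => ⟨fun h => h.1.symm, fun h => ⟨h.symm, hc⟩⟩
      simp only [hiff]
      by_cases hj : (j : ℕ) < e
      · rw [dif_pos hj]
        have hiff2 : ∀ i : Fin e, ((i : ℕ) = (j : ℕ)) ↔ i = ⟨j, hj⟩ :=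
          fun i => ⟨fun hh => Fin.ext hh, fun hh => hh ▸ rfl⟩
        simp only [hiff2, mul_ite, mul_one, mul_zero, Finset.sum_ite_eq',
          Finset.mem_univ, if_true]
        ring
      · rw [dif_neg hj, mul_zero]
        refine Finset.sum_eq_zero fun i _ => ?_
        have := i.isLt
        rw [if_neg (by omega), mul_zero]
    · rw [if_neg (fun h => hc (Finset.mem_Ico.mpr h))]
      refine Finset.sum_eq_zero fun i _ => ?_
      rw [if_neg (fun h => hc h.2), mul_zero]
  -- the index set is an interval
  have hT : ∀ m k : ℕ, ∃ m' k',
      (Finset.range d).filter (fun n => m ≤ ℓ' n ∧ ℓ' n < k) = Finset.Ico m' k' := by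
    intro m k
    set T := (Finset.range d).filter (fun n => m ≤ ℓ' n ∧ ℓ' n < k) with hTdef
    have hmono' : ∀ p q, p ≤ q → q < d → ℓ' p ≤ ℓ' q := by
      intro p q hpq hq
      have hp : p < d := lt_of_le_of_lt hpq hq
      rw [hℓ'eq ⟨p, hp⟩, hℓ'eq ⟨q, hq⟩]
      exact hmono.monotone (show (⟨p, hp⟩ : Fin d) ≤ ⟨q, hq⟩ from hpq)
    rcases T.eq_empty_or_nonempty with hE | hne
    · exact ⟨0, 0, by rw [hE]; simp⟩
    · refine ⟨T.min' hne, T.max' hne + 1, ?_⟩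
      ext n
      rw [Finset.mem_Ico]
      constructor
      · intro hn; exact ⟨T.min'_le n hn, Nat.lt_succ_of_le (T.le_max' n hn)⟩
      · rintro ⟨h1, h2⟩
        have hmin := Finset.mem_filter.mp (T.min'_mem hne)
        have hmax := Finset.mem_filter.mp (T.max'_mem hne)
        rw [Finset.mem_range] at hmin hmax
        have h2' : n ≤ T.max' hne := Nat.lt_succ_iff.mp h2
        have hnd : n < d := lt_of_le_of_lt h2' hmax.1
        exact Finset.mem_filter.mpr ⟨Finset.mem_range.mpr hnd,
          le_trans hmin.2.1 (hmono' _ _ h1 hnd),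
          lt_of_le_of_lt (hmono' _ _ h2' hmax.1) hmax.2.2⟩
  -- upper bound
  have hub : ∀ r ∈ { r : ℝ | ∃ (e : ℕ) (b : Fin e → ℝ) (m k : ℕ),
      ‖∑ i, b i • zstar i.val‖ ≤ 1 ∧
      r = |∑ i, b i * ∑ q ∈ Finset.Ico m k, (Λ i.val).indicator (⇑x) q| }, r ≤ 1 := by
    rintro r ⟨e, b, m, k, hb, rfl⟩
    rw [hval]
    obtain ⟨m', k', hmk⟩ := hT m k
    rw [hmk]
    have hFw := hF e b (Finset.Ico m' k') a'
    rw [← hFw]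
    have h1 := (∑ i : Fin e, b i • zstar i.val).le_opNorm (∑ n ∈ Finset.Ico m' k', a' n • z n)
    rw [Real.norm_eq_abs] at h1
    calc |(∑ i : Fin e, b i • zstar i.val) (∑ n ∈ Finset.Ico m' k', a' n • z n)|
        ≤ ‖∑ i : Fin e, b i • zstar i.val‖ * ‖∑ n ∈ Finset.Ico m' k', a' n • z n‖ := h1
      _ ≤ 1 * 1 := mul_le_mul hb (hIco_le m' k') (norm_nonneg _) zero_le_one
      _ = 1 := mul_one 1
  -- attainment of 1
  have hz0ne : z0 ≠ 0 := fun h => by simp [h] at hz0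
  obtain ⟨g, hg1, hgz0⟩ := exists_dual_vector ℝ z0 (norm_ne_zero_iff.mpr hz0ne)
  set b : Fin d → ℝ := fun i => g (z i.val) with hbdef
  have hb : ‖∑ i : Fin d, b i • zstar i.val‖ ≤ 1 := by
    refine ContinuousLinearMap.opNorm_le_bound _ zero_le_one fun v => ?_
    obtain ⟨c, hc, -⟩ := hbasis.1 v
    have h1 : (∑ i : Fin d, b i • zstar i.val) v = g (∑ n ∈ Finset.range d, c n • z n) := by
      rw [ContinuousLinearMap.sum_apply]
      simp only [ContinuousLinearMap.smul_apply, smul_eq_mul]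
      simp_rw [hcoeff c v hc]
      rw [map_sum]
      simp_rw [map_smul, smul_eq_mul]
      rw [← Fin.sum_univ_eq_sum_range (fun n => c n * g (z n))]
      exact Finset.sum_congr rfl fun i _ => mul_comm _ _
    rw [h1]
    have h2 : ‖∑ n ∈ Finset.range d, c n • z n‖ ≤ ‖v‖ := by
      have := hbasis.2 c v hc 0 d
      rwa [← Finset.range_eq_Ico] at this
    calc ‖g (∑ n ∈ Finset.range d, c n • z n)‖
        ≤ ‖g‖ * ‖∑ n ∈ Finset.range d, c n • z n‖ := g.le_opNorm _
      _ = ‖∑ n ∈ Finset.range d, c n • z n‖ := by rw [hg1, one_mul]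
      _ ≤ ‖v‖ := h2
      _ = 1 * ‖v‖ := (one_mul _).symm
  have h1mem : (1 : ℝ) ∈ { r : ℝ | ∃ (e : ℕ) (b : Fin e → ℝ) (m k : ℕ),
      ‖∑ i, b i • zstar i.val‖ ≤ 1 ∧
      r = |∑ i, b i * ∑ q ∈ Finset.Ico m k, (Λ i.val).indicator (⇑x) q| } := by
    refine ⟨d, b, 0, (Finset.univ.sup fun i : Fin d => ℓ i) + 1, hb, ?_⟩
    rw [hval]
    have hall : (Finset.range d).filter
        (fun n => 0 ≤ ℓ' n ∧ ℓ' n < (Finset.univ.sup fun i : Fin d => ℓ i) + 1)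
          = Finset.range d := by
      refine Finset.filter_true_of_mem fun n hn => ?_
      rw [Finset.mem_range] at hn
      refine ⟨Nat.zero_le _, ?_⟩
      rw [hℓ'eq ⟨n, hn⟩]
      exact Nat.lt_succ_of_le (Finset.le_sup (Finset.mem_univ (⟨n, hn⟩ : Fin d)))
    rw [hall,
      ← Fin.sum_univ_eq_sum_range (fun n => a' n * (if h : n < d then b ⟨n, h⟩ else 0))]
    have hterm : ∀ i : Fin d,
        a' ↑i * (if h : (i : ℕ) < d then b ⟨i, h⟩ else 0) = a i * g (z ↑i) := by
      intro i
      rw [ha'eq, dif_pos i.isLt]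
    rw [Finset.sum_congr rfl fun i _ => hterm i]
    have hsum : ∑ i : Fin d, a i * g (z ↑i) = g z0 := by
      rw [hz0def, map_sum]
      simp_rw [map_smul, smul_eq_mul]
    rw [hsum, hgz0, hz0]
    norm_num
  exact le_antisymm (csSup_le ⟨1, h1mem⟩ hub) (le_csSup ⟨1, hub⟩ h1mem)
end
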